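/- Let X be a complete CAT(0) space, E an n-flat in X, x ∈ E, and ρ : [0,∞) → X a geodesic ray with ρ(0) = x whose Busemann function b_ρ(y) = lim_{t→∞} (d(y,ρ(t)) − t) is constant on E. Then for every x' ∈ E and every t ≥ 0 one has d(x', ρ(t))² = d(x', x)² + t². -/

import Mathlib

open Filter

/-- `m` is a midpoint of `x` and `y`. -/
def IsMidpoint {X : Type*} [MetricSpace X] (x y m : X) : Prop :=
  dist x m = dist x y / 2 ∧ dist y m = dist x y / 2

/-- A complete metric space is CAT(0) if midpoints exist and the
Bruhat–Tits inequality holds. -/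
def IsCAT0 (X : Type*) [MetricSpace X] : Prop :=
  (∀ x y : X, ∃ m : X, IsMidpoint x y m) ∧
  ∀ x y z m : X, IsMidpoint x y m →
    dist z m ^ 2 ≤ dist z x ^ 2 / 2 + dist z y ^ 2 / 2 - dist x y ^ 2 / 4

/-- An `n`-flat in `X`: the image of an isometric embedding of `ℝⁿ`. -/
def IsNFlat {X : Type*} [MetricSpace X] (n : ℕ) (F : Set X) : Prop :=
  ∃ ψ : EuclideanSpace ℝ (Fin n) → X, Isometry ψ ∧ Set.range ψ = F

/-- A geodesic ray in `X` (parametrized by nonnegative reals). -/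
def IsGeodesicRay {X : Type*} [MetricSpace X] (ρ : ℝ → X) : Prop :=
  ∀ s t : ℝ, 0 ≤ s → 0 ≤ t → dist (ρ s) (ρ t) = |s - t|

/-!
Write `g_y(u) = (d(y, ρ u)² - u² - d(y, ρ 0)²) / u`. Since `ρ u` is the midpoint of `ρ 0` and
`ρ (2u)`, the Bruhat–Tits inequality says `g_y(u) ≤ g_y(2u)`, and `g_y(T) → 2 b_ρ(y)` as
`T → ∞`; hence `d(y, ρ s)² ≤ d(y, ρ 0)² + s² + 2 s b_ρ(y)`. On the flat `b_ρ = b_ρ(x) = 0`.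
For `x' ∈ E`, the point `x` is the midpoint of `x'` and its reflection `x''` in `E`, and the
Bruhat–Tits inequality at `ρ t` turns the two upper bounds at `x'` and `x''` into equalities.
-/

open Topology

lemma tendsto_sq_sub_sq_sub_div_atTop {f : ℝ → ℝ} {c : ℝ} (a : ℝ)
    (hf : Tendsto (fun T => f T - T) atTop (𝓝 c)) :
    Tendsto (fun T => (f T ^ 2 - T ^ 2 - a) / T) atTop (𝓝 (2 * c)) := by
  have hinv : Tendsto (fun T : ℝ => T⁻¹) atTop (𝓝 0) := tendsto_inv_atTop_zero
  have hlim : Tendsto (fun T => (f T - T) ^ 2 * T⁻¹ + 2 * (f T - T) - a * T⁻¹) atTop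
      (𝓝 (2 * c)) := by
    simpa using ((hf.pow 2).mul hinv).add (hf.const_mul 2) |>.sub (hinv.const_mul a)
  refine hlim.congr' ?_
  filter_upwards [eventually_ne_atTop 0] with T hT
  field_simp
  ring

namespace IsGeodesicRay

variable {X : Type*} [MetricSpace X] {ρ : ℝ → X}

lemma dist_zero (hρ : IsGeodesicRay ρ) {t : ℝ} (ht : 0 ≤ t) : dist (ρ 0) (ρ t) = t := by
  rw [hρ 0 t le_rfl ht, zero_sub, abs_neg, abs_of_nonneg ht]

lemma isMidpoint_zero_two_mul (hρ : IsGeodesicRay ρ) {u : ℝ} (hu : 0 ≤ u) :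
    IsMidpoint (ρ 0) (ρ (2 * u)) (ρ u) := by
  have h2u : dist (ρ 0) (ρ (2 * u)) = 2 * u := hρ.dist_zero (by linarith)
  constructor
  · rw [hρ.dist_zero hu, h2u]
    ring
  · rw [hρ (2 * u) u (by linarith) hu, h2u, abs_of_nonneg (by linarith)]
    ring

end IsGeodesicRay

namespace IsCAT0

variable {X : Type*} [MetricSpace X] {ρ : ℝ → X}

lemma sq_dist_ray_div_le_two_mul (hX : IsCAT0 X) (hρ : IsGeodesicRay ρ) (y : X) {u : ℝ}
    (hu : 0 < u) :
    (dist y (ρ u) ^ 2 - u ^ 2 - dist y (ρ 0) ^ 2) / u ≤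
      (dist y (ρ (2 * u)) ^ 2 - (2 * u) ^ 2 - dist y (ρ 0) ^ 2) / (2 * u) := by
  have hBT := hX.2 _ _ y _ (hρ.isMidpoint_zero_two_mul hu.le)
  rw [hρ.dist_zero (by linarith : (0 : ℝ) ≤ 2 * u)] at hBT
  rw [div_le_div_iff₀ hu (by linarith)]
  nlinarith

lemma sq_dist_ray_le (hX : IsCAT0 X) (hρ : IsGeodesicRay ρ) {y : X} {c : ℝ}
    (hy : Tendsto (fun t => dist y (ρ t) - t) atTop (𝓝 c)) {s : ℝ} (hs : 0 ≤ s) :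
    dist y (ρ s) ^ 2 ≤ dist y (ρ 0) ^ 2 + s ^ 2 + 2 * c * s := by
  rcases hs.eq_or_lt with rfl | hs
  · simp
  set g : ℝ → ℝ := fun u => (dist y (ρ u) ^ 2 - u ^ 2 - dist y (ρ 0) ^ 2) / u
  have hmono : Monotone fun k : ℕ => g (2 ^ k * s) := by
    refine monotone_nat_of_le_succ fun k => ?_
    rw [pow_succ, mul_comm _ (2 : ℝ), mul_assoc]
    exact hX.sq_dist_ray_div_le_two_mul hρ y (by positivity)
  have hdoubling : Tendsto (fun k : ℕ => (2 : ℝ) ^ k * s) atTop atTop :=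
    (tendsto_pow_atTop_atTop_of_one_lt one_lt_two).atTop_mul_const hs
  have hg : Tendsto g atTop (𝓝 (2 * c)) := tendsto_sq_sub_sq_sub_div_atTop _ hy
  have hle : g s ≤ 2 * c := by
    simpa using hmono.ge_of_tendsto (hg.comp hdoubling) 0
  rw [div_le_iff₀ hs] at hle
  linarith

end IsCAT0

lemma IsNFlat.exists_isMidpoint {X : Type*} [MetricSpace X] {n : ℕ} {E : Set X}
    (hE : IsNFlat n E) {x x' : X} (hx : x ∈ E) (hx' : x' ∈ E) :
    ∃ x'' ∈ E, IsMidpoint x' x'' x := by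
  obtain ⟨ψ, hψ, rfl⟩ := hE
  obtain ⟨a, rfl⟩ := hx
  obtain ⟨b, rfl⟩ := hx'
  refine ⟨ψ (2 • a - b), ⟨_, rfl⟩, ?_⟩
  simp only [IsMidpoint, hψ.dist_eq, dist_eq_norm]
  rw [show b - (2 • a - b) = (2 : ℝ) • (b - a) by module,
    show 2 • a - b - a = -(b - a) by module, norm_smul, norm_neg]
  norm_num

theorem stmt11_general {X : Type*} [MetricSpace X] (hX : IsCAT0 X)
    {n : ℕ} (E : Set X) (hE : IsNFlat n E) (x : X) (hx : x ∈ E)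
    (ρ : ℝ → X) (hρ : IsGeodesicRay ρ) (hρ0 : ρ 0 = x)
    -- the Busemann function of `ρ` is constant on `E`
    (hbus : ∃ c : ℝ, ∀ y ∈ E,
      Tendsto (fun t : ℝ => dist y (ρ t) - t) atTop (nhds c)) :
    ∀ x' ∈ E, ∀ t : ℝ, 0 ≤ t →
      dist x' (ρ t) ^ 2 = dist x' x ^ 2 + t ^ 2 := by
  obtain ⟨c, hc⟩ := hbus
  subst hρ0
  have hc0 : c = 0 := by
    refine tendsto_nhds_unique (hc _ hx) (tendsto_const_nhds.congr' ?_)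
    filter_upwards [eventually_ge_atTop 0] with t ht
    rw [hρ.dist_zero ht, sub_self]
  subst hc0
  intro x' hx' t ht
  obtain ⟨x'', hx'', hmid⟩ := hE.exists_isMidpoint hx hx'
  have hBT := hX.2 x' x'' (ρ t) (ρ 0) hmid
  have hup' := hX.sq_dist_ray_le hρ (hc x' hx') ht
  have hup'' := hX.sq_dist_ray_le hρ (hc x'' hx'') ht
  rw [dist_comm, hρ.dist_zero ht, dist_comm (ρ t), dist_comm (ρ t)] at hBT
  obtain ⟨hd', hd''⟩ := hmid
  rw [hd'] at hup' ⊢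
  rw [hd''] at hup''
  linarith

theorem stmt11 {X : Type*} [MetricSpace X] [CompleteSpace X] (hX : IsCAT0 X)
    {n : ℕ} (E : Set X) (hE : IsNFlat n E) (x : X) (hx : x ∈ E)
    (ρ : ℝ → X) (hρ : IsGeodesicRay ρ) (hρ0 : ρ 0 = x)
    -- the Busemann function of `ρ` is constant on `E`
    (hbus : ∃ c : ℝ, ∀ y ∈ E,
      Tendsto (fun t : ℝ => dist y (ρ t) - t) atTop (nhds c)) :
    ∀ x' ∈ E, ∀ t : ℝ, 0 ≤ t →
      dist x' (ρ t) ^ 2 = dist x' x ^ 2 + t ^ 2 :=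
  stmt11_general hX E hE x hx ρ hρ hρ0 hbus
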